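/- arXiv:2010.12580 — 3 statements merged into one kernel-verified Lean document; each statement's English description precedes it below -/
import Mathlib

section
/- Let x₁,…,x_N ∈ ℝ^p and let c ∈ ℝ^p be a nonzero vector lying in the span of {x₁,…,x_N}. Let b* ∈ ℝ^N minimize ‖b‖₁ over all b ∈ ℝ^N satisfying Σ_i b_i x_i = c, and define the design w* by w*_i = |b*_i| / ‖b*‖₁. Then: (a) c lies in the range of Σ_{w*}; (b) cᵀ(Σ_{w*})⁺c = ‖b*‖₁²; and (c) for every probability vector w ∈ ℝ^N such that c lies in the range of Σ_w, one has cᵀ(Σ_w)⁺c ≥ ‖b*‖₁². In particular, w* is a c-optimal design. -/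
open Matrix Finset

open scoped Classical in
/-- The Moore–Penrose pseudo-inverse of a real matrix, defined (via choice) as the
unique matrix satisfying the four Penrose conditions. -/
noncomputable def penroseInv {m n : ℕ} (A : Matrix (Fin m) (Fin n) ℝ) :
    Matrix (Fin n) (Fin m) ℝ :=
  if h : ∃ B : Matrix (Fin n) (Fin m) ℝ,
      A * B * A = A ∧ B * A * B = B ∧ (A * B)ᵀ = A * B ∧ (B * A)ᵀ = B * A
  then h.choose else 0

/-- The design covariance matrix `Σ_w = Σᵢ wᵢ xᵢ xᵢᵀ`. -/
noncomputable def covMatrix {N p : ℕ} (w : Fin N → ℝ) (x : Fin N → Fin p → ℝ) :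
    Matrix (Fin p) (Fin p) ℝ :=
  ∑ i, w i • Matrix.vecMulVec (x i) (x i)

section Aux

/-- Every real symmetric matrix has a Moore–Penrose inverse. -/
lemma exists_penrose_of_isHermitian {n : ℕ} (A : Matrix (Fin n) (Fin n) ℝ)
    (hA : A.IsHermitian) :
    ∃ B : Matrix (Fin n) (Fin n) ℝ,
      A * B * A = A ∧ B * A * B = B ∧ (A * B)ᵀ = A * B ∧ (B * A)ᵀ = B * A := by
  classical
  set U : Matrix (Fin n) (Fin n) ℝ := (hA.eigenvectorUnitary : Matrix (Fin n) (Fin n) ℝ) with hU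
  set d : Fin n → ℝ := hA.eigenvalues with hd
  set e : Fin n → ℝ := fun i => if d i = 0 then 0 else (d i)⁻¹ with he
  have hVU : star U * U = 1 := by
    simpa [hU] using (unitary.coe_star_mul_self hA.eigenvectorUnitary)
  have hAeq : A = U * diagonal d * star U := by
    have h := hA.spectral_theorem
    have h2 : (RCLike.ofReal ∘ hA.eigenvalues : Fin n → ℝ) = d := by
      funext i; simp [hd]
    rw [h2] at h
    exact h
  have key : ∀ f g : Fin n → ℝ,
      (U * diagonal f * star U) * (U * diagonal g * star U)
        = U * diagonal (fun i => f i * g i) * star U := by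
    intro f g
    calc (U * diagonal f * star U) * (U * diagonal g * star U)
        = U * diagonal f * (star U * U) * (diagonal g * star U) := by
          simp only [Matrix.mul_assoc]
      _ = U * (diagonal f * diagonal g) * star U := by
          rw [hVU, Matrix.mul_one]; simp only [Matrix.mul_assoc]
      _ = U * diagonal (fun i => f i * g i) * star U := by rw [diagonal_mul_diagonal]
  have key3 : ∀ f g h : Fin n → ℝ,
      (U * diagonal f * star U) * (U * diagonal g * star U) * (U * diagonal h * star U)
        = U * diagonal (fun i => f i * g i * h i) * star U := by
    intro f g h
    calc (U * diagonal f * star U) * (U * diagonal g * star U) * (U * diagonal h * star U)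
        = (U * diagonal (fun i => f i * g i) * star U) * (U * diagonal h * star U) := by
          rw [key]
      _ = U * diagonal (fun i => f i * g i * h i) * star U := key _ _
  have hsym : ∀ f : Fin n → ℝ, (U * diagonal f * star U)ᵀ = U * diagonal f * star U := by
    intro f
    have hstar : star U = Uᵀ := by
      rw [Matrix.star_eq_conjTranspose]
      ext i j
      simp [Matrix.conjTranspose_apply]
    rw [hstar, Matrix.transpose_mul, Matrix.transpose_mul, Matrix.transpose_transpose,
      Matrix.diagonal_transpose, Matrix.mul_assoc]
  have hded : (fun i => d i * e i * d i) = d := by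
    funext i
    by_cases h : d i = 0
    · simp [he, h]
    · simp only [he, if_neg h]
      field_simp
  have hede : (fun i => e i * d i * e i) = e := by
    funext i
    by_cases h : d i = 0
    · simp [he, h]
    · simp only [he, if_neg h]
      field_simp
  refine ⟨U * diagonal e * star U, ?_, ?_, ?_, ?_⟩
  · rw [hAeq, key3, hded]
  · rw [hAeq, key3, hede]
  · rw [hAeq, key]; exact hsym _
  · rw [hAeq, key]; exact hsym _

lemma penroseInv_dot {n : ℕ} (A : Matrix (Fin n) (Fin n) ℝ) (hA : A.IsHermitian)
    (c z : Fin n → ℝ) (hz : A *ᵥ z = c) :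
    c ⬝ᵥ (penroseInv A) *ᵥ c = z ⬝ᵥ (A *ᵥ z) := by
  have hex := exists_penrose_of_isHermitian A hA
  unfold penroseInv
  rw [dif_pos hex]
  obtain ⟨h1, -, -, -⟩ := hex.choose_spec
  set B := hex.choose with hB
  have hAt : Aᵀ = A := by
    ext i j
    simpa using hA.apply i j
  calc c ⬝ᵥ B *ᵥ c = (A *ᵥ z) ⬝ᵥ ((B * A) *ᵥ z) := by
        rw [← hz, Matrix.mulVec_mulVec]
    _ = (z ᵥ* Aᵀ) ⬝ᵥ ((B * A) *ᵥ z) := by rw [Matrix.vecMul_transpose]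
    _ = z ⬝ᵥ ((Aᵀ * (B * A)) *ᵥ z) := by
        rw [Matrix.dotProduct_mulVec, Matrix.dotProduct_mulVec, Matrix.vecMul_vecMul]
    _ = z ⬝ᵥ (A *ᵥ z) := by rw [hAt, ← Matrix.mul_assoc, h1]

lemma dot_sum {p N : ℕ} (v : Fin p → ℝ) (f : Fin N → Fin p → ℝ) :
    v ⬝ᵥ (∑ i, f i) = ∑ i, v ⬝ᵥ f i := by
  simp only [dotProduct, Finset.sum_apply, Finset.mul_sum]
  exact Finset.sum_comm

lemma covMatrix_apply {N p : ℕ} (w : Fin N → ℝ) (x : Fin N → Fin p → ℝ) (j k : Fin p) :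
    covMatrix w x j k = ∑ i, w i * (x i j * x i k) := by
  simp [covMatrix, Matrix.sum_apply, Matrix.vecMulVec_apply, mul_assoc]

lemma covMatrix_isHermitian {N p : ℕ} (w : Fin N → ℝ) (x : Fin N → Fin p → ℝ) :
    (covMatrix w x).IsHermitian := by
  rw [Matrix.IsHermitian]
  ext j k
  simp only [Matrix.conjTranspose_apply, covMatrix_apply, star_trivial]
  exact Finset.sum_congr rfl fun i _ => by ring

lemma covMatrix_mulVec_eq_sum {N p : ℕ} (w : Fin N → ℝ) (x : Fin N → Fin p → ℝ)
    (z : Fin p → ℝ) :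
    covMatrix w x *ᵥ z = ∑ i, (w i * (x i ⬝ᵥ z)) • x i := by
  funext j
  simp only [Matrix.mulVec, dotProduct, covMatrix_apply, Finset.sum_mul,
    Finset.sum_apply, Pi.smul_apply, smul_eq_mul]
  rw [Finset.sum_comm]
  refine Finset.sum_congr rfl fun i _ => ?_
  simp only [dotProduct, Finset.sum_mul, Finset.mul_sum]
  exact Finset.sum_congr rfl fun k _ => by ring

lemma covMatrix_quad {N p : ℕ} (w : Fin N → ℝ) (x : Fin N → Fin p → ℝ) (z : Fin p → ℝ) :
    z ⬝ᵥ (covMatrix w x *ᵥ z) = ∑ i, w i * (x i ⬝ᵥ z) ^ 2 := by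
  rw [covMatrix_mulVec_eq_sum, dot_sum]
  refine Finset.sum_congr rfl fun i _ => ?_
  rw [dotProduct_smul, smul_eq_mul, dotProduct_comm]
  ring

/-- Weighted Cauchy–Schwarz. -/
lemma weighted_cs {N : ℕ} (w t : Fin N → ℝ) (hw : ∀ i, 0 ≤ w i) :
    (∑ i, w i * |t i|) ^ 2 ≤ (∑ i, w i) * ∑ i, w i * t i ^ 2 := by
  have h := Finset.sum_mul_sq_le_sq_mul_sq Finset.univ
    (fun i => Real.sqrt (w i)) (fun i => Real.sqrt (w i) * |t i|)
  have h1 : ∀ i : Fin N, Real.sqrt (w i) * (Real.sqrt (w i) * |t i|) = w i * |t i| := by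
    intro i; rw [← mul_assoc, Real.mul_self_sqrt (hw i)]
  have h2 : ∀ i : Fin N, Real.sqrt (w i) ^ 2 = w i := fun i => Real.sq_sqrt (hw i)
  have h3 : ∀ i : Fin N, (Real.sqrt (w i) * |t i|) ^ 2 = w i * t i ^ 2 := by
    intro i; rw [mul_pow, h2, sq_abs]
  calc (∑ i, w i * |t i|) ^ 2
      = (∑ i, Real.sqrt (w i) * (Real.sqrt (w i) * |t i|)) ^ 2 := by
        congr 1; exact Finset.sum_congr rfl fun i _ => (h1 i).symm
    _ ≤ (∑ i, Real.sqrt (w i) ^ 2) * ∑ i, (Real.sqrt (w i) * |t i|) ^ 2 := h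
    _ = (∑ i, w i) * ∑ i, w i * t i ^ 2 := by
        congr 1
        · exact Finset.sum_congr rfl fun i _ => h2 i
        · exact Finset.sum_congr rfl fun i _ => h3 i

end Aux

/-- Key lower bound: any feasible design has value at least `(∑|b*|)²`. -/
lemma design_lower_bound {N p : ℕ} (x : Fin N → Fin p → ℝ) (c : Fin p → ℝ)
    (bstar : Fin N → ℝ)
    (hmin : ∀ b : Fin N → ℝ, ∑ i, b i • x i = c → ∑ i, |bstar i| ≤ ∑ i, |b i|)
    (w : Fin N → ℝ) (hw0 : ∀ i, 0 ≤ w i) (hw1 : ∑ i, w i = 1)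
    (z : Fin p → ℝ) (hz : covMatrix w x *ᵥ z = c) :
    (∑ i, |bstar i|) ^ 2 ≤ z ⬝ᵥ (covMatrix w x *ᵥ z) := by
  have hS0 : (0:ℝ) ≤ ∑ i, |bstar i| := Finset.sum_nonneg fun i _ => abs_nonneg _
  have hb : ∑ i, (w i * (x i ⬝ᵥ z)) • x i = c := by rw [← covMatrix_mulVec_eq_sum, hz]
  have hSle : ∑ i, |bstar i| ≤ ∑ i, |w i * (x i ⬝ᵥ z)| := hmin _ hb
  have habs : (∑ i, |w i * (x i ⬝ᵥ z)|) = ∑ i, w i * |x i ⬝ᵥ z| :=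
    Finset.sum_congr rfl fun i _ => by rw [abs_mul, abs_of_nonneg (hw0 i)]
  have hSle' : ∑ i, |bstar i| ≤ ∑ i, w i * |x i ⬝ᵥ z| := by rw [← habs]; exact hSle
  have hcs := weighted_cs w (fun i => x i ⬝ᵥ z) hw0
  rw [hw1, one_mul] at hcs
  calc (∑ i, |bstar i|) ^ 2 ≤ (∑ i, w i * |x i ⬝ᵥ z|) ^ 2 := by
        exact pow_le_pow_left₀ hS0 hSle' 2
    _ ≤ ∑ i, w i * (x i ⬝ᵥ z) ^ 2 := hcs
    _ = z ⬝ᵥ (covMatrix w x *ᵥ z) := (covMatrix_quad w x z).symm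

/-- Equivalence of the c-optimal design problem P1 with the ℓ₁-minimization
problem P1′: if `b*` minimizes `‖b‖₁` subject to `Σᵢ bᵢ xᵢ = c`, then the design
`w*ᵢ = |b*ᵢ|/‖b*‖₁` has `c` in the range of `Σ_{w*}`, achieves
`cᵀ Σ_{w*}⁺ c = ‖b*‖₁²`, and this value is optimal over all feasible designs. -/
theorem l1_minimizer_gives_c_optimal_design
    (N p : ℕ) (x : Fin N → Fin p → ℝ) (c : Fin p → ℝ)
    (hc0 : c ≠ 0) (hcspan : c ∈ Submodule.span ℝ (Set.range x))
    (bstar : Fin N → ℝ)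
    (hfeas : ∑ i, bstar i • x i = c)
    (hmin : ∀ b : Fin N → ℝ, ∑ i, b i • x i = c → ∑ i, |bstar i| ≤ ∑ i, |b i|)
    (wstar : Fin N → ℝ)
    (hwstar : ∀ i, wstar i = |bstar i| / ∑ i', |bstar i'|) :
    (∃ z, (covMatrix wstar x).mulVec z = c) ∧
    (c ⬝ᵥ (penroseInv (covMatrix wstar x)).mulVec c = (∑ i, |bstar i|) ^ 2) ∧
    (∀ w : Fin N → ℝ, (∀ i, 0 ≤ w i) → ∑ i, w i = 1 →
      (∃ z, (covMatrix w x).mulVec z = c) →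
      (∑ i, |bstar i|) ^ 2 ≤ c ⬝ᵥ (penroseInv (covMatrix w x)).mulVec c) := by
  classical
  set S : ℝ := ∑ i, |bstar i| with hSdef
  have hS0 : 0 ≤ S := Finset.sum_nonneg fun i _ => abs_nonneg _
  have hSpos : 0 < S := by
    rcases hS0.lt_or_eq with h | h
    · exact h
    · exfalso; apply hc0
      have hb0 : ∀ i, bstar i = 0 := by
        intro i
        have h0 := (Finset.sum_eq_zero_iff_of_nonneg
          (fun i _ => abs_nonneg (bstar i))).mp h.symm i (Finset.mem_univ i)
        exact abs_eq_zero.mp h0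
      rw [← hfeas]
      simp [hb0]
  have hw0 : ∀ i, 0 ≤ wstar i := by
    intro i
    rw [hwstar i]
    positivity
  have hw1 : ∑ i, wstar i = 1 := by
    have : ∑ i, wstar i = ∑ i, |bstar i| / S := by
      refine Finset.sum_congr rfl fun i _ => ?_
      rw [hwstar i]
    rw [this, ← Finset.sum_div, ← hSdef, div_self hSpos.ne']
  have hwpos : ∀ i, bstar i ≠ 0 → 0 < wstar i := by
    intro i hi
    rw [hwstar i]
    exact div_pos (abs_pos.mpr hi) hSpos
  have hbw : ∀ i, |bstar i| = S * wstar i := by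
    intro i
    rw [hwstar i, mul_div_cancel₀ _ hSpos.ne']
  -- part (a)
  set A : Matrix (Fin N) (Fin p) ℝ := Matrix.of (fun i j => Real.sqrt (wstar i) * x i j)
    with hAdef
  have hfact : Aᴴ * A = covMatrix wstar x := by
    ext j k
    rw [covMatrix_apply]
    simp only [Matrix.mul_apply, Matrix.conjTranspose_apply, hAdef, Matrix.of_apply,
      star_trivial]
    refine Finset.sum_congr rfl fun i _ => ?_
    have hsq : Real.sqrt (wstar i) * Real.sqrt (wstar i) = wstar i :=
      Real.mul_self_sqrt (hw0 i)
    calc Real.sqrt (wstar i) * x i j * (Real.sqrt (wstar i) * x i k)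
        = (Real.sqrt (wstar i) * Real.sqrt (wstar i)) * (x i j * x i k) := by ring
      _ = wstar i * (x i j * x i k) := by rw [hsq]
  have hrange_le : LinearMap.range (Aᴴ * A).mulVecLin ≤ LinearMap.range (Aᴴ).mulVecLin := by
    rintro _ ⟨v, rfl⟩
    refine ⟨A *ᵥ v, ?_⟩
    simp [Matrix.mulVecLin_apply, Matrix.mulVec_mulVec]
  have hrank_eq : (Aᴴ * A).rank = Aᴴ.rank := by
    rw [Matrix.rank_conjTranspose_mul_self, Matrix.rank_conjTranspose]
  have hfr : Module.finrank ℝ (LinearMap.range (Aᴴ).mulVecLin)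
      ≤ Module.finrank ℝ (LinearMap.range (Aᴴ * A).mulVecLin) := le_of_eq hrank_eq.symm
  have hrange_eq := Submodule.eq_of_le_of_finrank_le hrange_le hfr
  have hc_mem : c ∈ LinearMap.range (Aᴴ).mulVecLin := by
    refine ⟨fun i => if bstar i = 0 then 0 else bstar i / Real.sqrt (wstar i), ?_⟩
    funext j
    have hcj : c j = ∑ i, bstar i * x i j := by
      rw [← hfeas]
      simp [Finset.sum_apply]
    rw [Matrix.mulVecLin_apply]
    show ∑ i, Aᴴ j i * _ = c j
    rw [hcj]
    refine Finset.sum_congr rfl fun i _ => ?_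
    simp only [Matrix.conjTranspose_apply, hAdef, Matrix.of_apply, star_trivial]
    by_cases hi : bstar i = 0
    · simp [hi]
    · have hwi : 0 < wstar i := hwpos i hi
      have hsq : Real.sqrt (wstar i) ≠ 0 := (Real.sqrt_pos.mpr hwi).ne'
      rw [if_neg hi]
      field_simp
  obtain ⟨z0, hz0⟩ : ∃ z, covMatrix wstar x *ᵥ z = c := by
    have hmem : c ∈ LinearMap.range (covMatrix wstar x).mulVecLin := by
      rw [← hfact, hrange_eq]
      exact hc_mem
    obtain ⟨z, hz⟩ := hmem
    exact ⟨z, by simpa [Matrix.mulVecLin_apply] using hz⟩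
  have hHerm := covMatrix_isHermitian wstar x
  -- value at wstar
  have hpen : c ⬝ᵥ (penroseInv (covMatrix wstar x)).mulVec c
      = z0 ⬝ᵥ (covMatrix wstar x *ᵥ z0) :=
    penroseInv_dot _ hHerm c z0 hz0
  have hLB : S ^ 2 ≤ z0 ⬝ᵥ (covMatrix wstar x *ᵥ z0) :=
    design_lower_bound x c bstar hmin wstar hw0 hw1 z0 hz0
  have hQform : z0 ⬝ᵥ (covMatrix wstar x *ᵥ z0) = ∑ i, wstar i * (x i ⬝ᵥ z0) ^ 2 :=
    covMatrix_quad wstar x z0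
  set Q : ℝ := z0 ⬝ᵥ (covMatrix wstar x *ᵥ z0) with hQdef
  set r : ℝ := ∑ i, wstar i * |x i ⬝ᵥ z0| with hrdef
  have hr0 : 0 ≤ r := Finset.sum_nonneg fun i _ => mul_nonneg (hw0 i) (abs_nonneg _)
  have hQr : Q ≤ S * r := by
    have h1 : Q = z0 ⬝ᵥ c := by rw [hQdef, hz0]
    have h2 : z0 ⬝ᵥ c = ∑ i, bstar i * (x i ⬝ᵥ z0) := by
      rw [← hfeas, dot_sum]
      refine Finset.sum_congr rfl fun i _ => ?_
      rw [dotProduct_smul, smul_eq_mul, dotProduct_comm]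
    calc Q = ∑ i, bstar i * (x i ⬝ᵥ z0) := by rw [h1, h2]
      _ ≤ ∑ i, |bstar i * (x i ⬝ᵥ z0)| := Finset.sum_le_sum fun i _ => le_abs_self _
      _ = ∑ i, S * (wstar i * |x i ⬝ᵥ z0|) := by
          refine Finset.sum_congr rfl fun i _ => ?_
          rw [abs_mul, hbw i]
          ring
      _ = S * r := by rw [hrdef, Finset.mul_sum]
  have hCS : r ^ 2 ≤ Q := by
    have h := weighted_cs wstar (fun i => x i ⬝ᵥ z0) hw0
    rw [hw1, one_mul] at h
    rw [hQform]
    exact h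
  have hQpos : 0 < Q := lt_of_lt_of_le (by positivity) hLB
  have hub : Q ≤ S ^ 2 := by
    have h1 : Q * Q ≤ (S * r) * (S * r) := mul_self_le_mul_self hQpos.le hQr
    have h3 : S ^ 2 * r ^ 2 ≤ S ^ 2 * Q := by
      have := mul_le_mul_of_nonneg_left hCS (le_of_lt (by positivity : (0:ℝ) < S ^ 2))
      exact this
    have h4 : Q * Q ≤ S ^ 2 * Q := by nlinarith
    exact le_of_mul_le_mul_right h4 hQpos
  have hQval : Q = S ^ 2 := le_antisymm hub hLB
  refine ⟨⟨z0, hz0⟩, ?_, ?_⟩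
  · rw [hpen]
    exact hQval
  · intro w hw0' hw1' ⟨z, hz⟩
    rw [penroseInv_dot _ (covMatrix_isHermitian w x) c z hz]
    exact design_lower_bound x c bstar hmin w hw0' hw1' z hz
end

section
/- Let x₁,…,x_N ∈ ℝ^p and let c ∈ ℝ^p be a nonzero vector lying in the span of {x₁,…,x_N}. Then there exists a probability vector w* ∈ ℝ^N with at most p nonzero entries such that c lies in the range of Σ_{w*} and cᵀ(Σ_{w*})⁺c ≤ cᵀ(Σ_w)⁺c for every probability vector w ∈ ℝ^N with c in the range of Σ_w. -/
open Matrix Finset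

lemma exists_penrose_of_symm {p : ℕ} (A : Matrix (Fin p) (Fin p) ℝ) (h : Aᵀ = A) :
    ∃ B : Matrix (Fin p) (Fin p) ℝ,
      A * B * A = A ∧ B * A * B = B ∧ (A * B)ᵀ = A * B ∧ (B * A)ᵀ = B * A := by
  have hA : A.IsHermitian := by rwa [Matrix.IsHermitian, conjTranspose_eq_transpose_of_trivial]
  set U : Matrix (Fin p) (Fin p) ℝ := (hA.eigenvectorUnitary : Matrix (Fin p) (Fin p) ℝ) with hU
  have hUU : star U * U = 1 := Unitary.coe_star_mul_self hA.eigenvectorUnitary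
  set d : Fin p → ℝ := hA.eigenvalues with hd
  have hspec : A = U * diagonal d * star U := by
    have := hA.spectral_theorem
    simpa [RCLike.ofReal_real_eq_id] using this
  set d' : Fin p → ℝ := fun i => if d i = 0 then 0 else (d i)⁻¹ with hd'
  have hsU : star U = Uᵀ := by
    rw [Matrix.star_eq_conjTranspose, conjTranspose_eq_transpose_of_trivial]
  have key : ∀ D E : Fin p → ℝ,
      (U * diagonal D * star U) * (U * diagonal E * star U)
        = U * diagonal (fun i => D i * E i) * star U := by
    intro D E
    have hDE : diagonal D * diagonal E = diagonal (fun i => D i * E i) := by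
      rw [diagonal_mul_diagonal]
    simp only [mul_assoc]
    rw [← mul_assoc (star U) U, hUU, one_mul, ← mul_assoc (diagonal D), hDE]
  have symm : ∀ D : Fin p → ℝ, (U * diagonal D * star U)ᵀ = U * diagonal D * star U := by
    intro D
    rw [transpose_mul, transpose_mul, hsU, transpose_transpose, diagonal_transpose, mul_assoc]
  refine ⟨U * diagonal d' * star U, ?_, ?_, ?_, ?_⟩
  · rw [hspec, key, key]
    have : (fun i => d i * d' i * d i) = d := by
      funext i; by_cases h0 : d i = 0 <;> simp [hd', h0]
    rw [this]
  · rw [hspec, key, key]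
    have : (fun i => d' i * d i * d' i) = d' := by
      funext i; by_cases h0 : d i = 0 <;> simp [hd', h0]
    rw [this]
  · rw [hspec, key]; exact symm _
  · rw [hspec, key]; exact symm _

lemma penroseInv_spec {p : ℕ} (M : Matrix (Fin p) (Fin p) ℝ) (h : Mᵀ = M) :
    M * penroseInv M * M = M ∧ penroseInv M * M * penroseInv M = penroseInv M ∧
      (M * penroseInv M)ᵀ = M * penroseInv M ∧ (penroseInv M * M)ᵀ = penroseInv M * M := by
  have hex := exists_penrose_of_symm M h
  unfold penroseInv
  rw [dif_pos hex]
  exact hex.choose_spec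

lemma sum_vecMulVec_mulVec {p : ℕ} {ι : Type*} [Fintype ι] (lam : ι → ℝ) (v : ι → Fin p → ℝ)
    (u : Fin p → ℝ) :
    (∑ j, lam j • vecMulVec (v j) (v j)) *ᵥ u = ∑ j, (lam j * (v j ⬝ᵥ u)) • v j := by
  funext k
  simp only [mulVec, dotProduct, Finset.sum_apply, Pi.smul_apply, smul_eq_mul,
    Matrix.sum_apply, Matrix.smul_apply, vecMulVec_apply, Finset.sum_mul, Finset.mul_sum]
  rw [Finset.sum_comm]
  exact Finset.sum_congr rfl fun j _ => Finset.sum_congr rfl fun m _ => by ring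

lemma dotProduct_sum_smul {p : ℕ} {ι : Type*} [Fintype ι] (z : Fin p → ℝ) (b : ι → ℝ)
    (v : ι → Fin p → ℝ) :
    z ⬝ᵥ (∑ j, b j • v j) = ∑ j, b j * (z ⬝ᵥ v j) := by
  simp only [dotProduct, Finset.sum_apply, Pi.smul_apply, smul_eq_mul, Finset.mul_sum]
  rw [Finset.sum_comm]
  exact Finset.sum_congr rfl fun j _ => Finset.sum_congr rfl fun m _ => by ring

lemma covMatrix_symm {N p : ℕ} (w : Fin N → ℝ) (x : Fin N → Fin p → ℝ) :
    (covMatrix w x)ᵀ = covMatrix w x := by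
  ext i j
  simp only [covMatrix, transpose_apply, Matrix.sum_apply, Matrix.smul_apply, vecMulVec_apply,
    smul_eq_mul]
  exact Finset.sum_congr rfl fun k _ => by ring

lemma dot_mulVec_eq {p : ℕ} (A : Matrix (Fin p) (Fin p) ℝ) (u v : Fin p → ℝ) :
    u ⬝ᵥ (A *ᵥ v) = (Aᵀ *ᵥ u) ⬝ᵥ v := by
  rw [Matrix.dotProduct_mulVec, ← Matrix.vecMul_transpose, transpose_transpose]

lemma penrose_value {N p : ℕ} (w : Fin N → ℝ) (x : Fin N → Fin p → ℝ) (z c : Fin p → ℝ)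
    (hz : (covMatrix w x) *ᵥ z = c) :
    c ⬝ᵥ (penroseInv (covMatrix w x)) *ᵥ c = z ⬝ᵥ c := by
  set M := covMatrix w x with hM
  have hMt : Mᵀ = M := covMatrix_symm w x
  obtain ⟨h1, h2, h3, h4⟩ := penroseInv_spec M hMt
  set B := penroseInv M with hB
  have hBt : M * Bᵀ * M = M := by
    have := congrArg Matrix.transpose h1
    rwa [transpose_mul, transpose_mul, hMt, ← mul_assoc] at this
  calc c ⬝ᵥ B *ᵥ c = (Bᵀ *ᵥ (M *ᵥ z)) ⬝ᵥ (M *ᵥ z) := by rw [dot_mulVec_eq, ← hz]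
    _ = ((M * (Bᵀ * M)) *ᵥ z) ⬝ᵥ z := by
        rw [mulVec_mulVec, dot_mulVec_eq (M) _ z, hMt, mulVec_mulVec, ← mul_assoc, mul_assoc]
    _ = z ⬝ᵥ c := by rw [← mul_assoc, hBt, hz, dotProduct_comm]


set_option maxHeartbeats 2000000 in
open scoped Classical in
/-- The c-optimal design problem P1 admits an optimal solution supported on at
most `p` design points. -/
theorem c_optimal_design_sparse_support
    (N p : ℕ) (x : Fin N → Fin p → ℝ) (c : Fin p → ℝ)
    (hc0 : c ≠ 0) (hcspan : c ∈ Submodule.span ℝ (Set.range x)) :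
    ∃ wstar : Fin N → ℝ,
      (∀ i, 0 ≤ wstar i) ∧ (∑ i, wstar i = 1) ∧
      ((Finset.univ.filter fun i => wstar i ≠ 0).card ≤ p) ∧
      (∃ z, (covMatrix wstar x).mulVec z = c) ∧
      (∀ w : Fin N → ℝ, (∀ i, 0 ≤ w i) → ∑ i, w i = 1 →
        (∃ z, (covMatrix w x).mulVec z = c) →
        c ⬝ᵥ (penroseInv (covMatrix wstar x)).mulVec c ≤
          c ⬝ᵥ (penroseInv (covMatrix w x)).mulVec c) := by
  obtain ⟨a, ha⟩ : ∃ a : Fin N → ℝ, ∑ i, a i • x i = c :=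
    (Submodule.mem_span_range_iff_exists_fun ℝ).1 hcspan
  set y : Fin N ⊕ Fin N → (Fin p → ℝ) := Sum.elim x (fun i => -x i) with hy
  set S : Set (Fin p → ℝ) := convexHull ℝ (Set.range y) with hS
  have hSconv : Convex ℝ S := convex_convexHull ℝ _
  have hNpos : 0 < N := by
    rcases Nat.eq_zero_or_pos N with h | h
    · exfalso; apply hc0; rw [← ha]; subst h; simp
    · exact h
  have hS0 : (0 : Fin p → ℝ) ∈ S := by
    have h1 : x ⟨0, hNpos⟩ ∈ S := subset_convexHull ℝ _ ⟨Sum.inl ⟨0, hNpos⟩, rfl⟩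
    have h2 : -x ⟨0, hNpos⟩ ∈ S := subset_convexHull ℝ _ ⟨Sum.inr ⟨0, hNpos⟩, rfl⟩
    have := hSconv h1 h2 (by norm_num : (0:ℝ) ≤ 1/2) (by norm_num : (0:ℝ) ≤ 1/2) (by norm_num)
    simpa using this
  have hscale : ∀ v ∈ S, ∀ s : ℝ, 0 ≤ s → s ≤ 1 → s • v ∈ S := by
    intro v hv s hs0 hs1
    have := hSconv hv hS0 hs0 (by linarith : (0:ℝ) ≤ 1 - s) (by ring)
    simpa using this
  have habs_pos : ∀ β : Fin N → ℝ, (∑ i, β i • x i = c) → 0 < ∑ i, |β i| := by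
    intro β hβ
    rcases (Finset.sum_nonneg (fun i _ => abs_nonneg (β i))).lt_or_eq with h | h
    · exact h
    · exfalso
      apply hc0
      rw [← hβ]
      have hz : ∀ i ∈ Finset.univ, |β i| = 0 :=
        (Finset.sum_eq_zero_iff_of_nonneg (fun i _ => abs_nonneg (β i))).1 h.symm
      have : ∀ i, β i = 0 := fun i => abs_eq_zero.1 (hz i (mem_univ i))
      simp [this]
  have hkey : ∀ β : Fin N → ℝ, (∑ i, β i • x i = c) → ∀ s : ℝ, 0 ≤ s →
      s * (∑ i, |β i|) ≤ 1 → s • c ∈ S := by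
    intro β hβ s hs0 hs1
    set A := ∑ i, |β i| with hA
    have hApos : 0 < A := habs_pos β hβ
    set μ : Fin N ⊕ Fin N → ℝ :=
      Sum.elim (fun i => max (β i) 0 / A) (fun i => max (-β i) 0 / A) with hμ
    have hμ0 : ∀ j, 0 ≤ μ j := by
      rintro (i | i) <;> simp only [hμ, Sum.elim_inl, Sum.elim_inr] <;> positivity
    have hμsum : ∑ j, μ j = 1 := by
      rw [Fintype.sum_sum_type]
      simp only [hμ, Sum.elim_inl, Sum.elim_inr]
      rw [← Finset.sum_add_distrib]
      have : ∀ i : Fin N, max (β i) 0 / A + max (-β i) 0 / A = |β i| / A := by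
        intro i
        rw [← add_div, max_zero_add_max_neg_zero_eq_abs_self]
      rw [Finset.sum_congr rfl (fun i _ => this i), ← Finset.sum_div, ← hA,
        div_self hApos.ne']
    have hμc : ∑ j, μ j • y j = (1/A) • c := by
      rw [Fintype.sum_sum_type]
      simp only [hμ, hy, Sum.elim_inl, Sum.elim_inr, smul_neg]
      rw [Finset.sum_neg_distrib, ← sub_eq_add_neg, ← Finset.sum_sub_distrib]
      have : ∀ i : Fin N, (max (β i) 0 / A) • x i - (max (-β i) 0 / A) • x i
          = (1/A) • (β i • x i) := by
        intro i
        rw [← sub_smul, div_sub_div_same, smul_smul]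
        congr 1
        have : max (β i) 0 - max (-β i) 0 = β i := by
          rcases le_total (β i) 0 with h | h
          · rw [max_eq_right h, max_eq_left (by linarith)]; ring
          · rw [max_eq_left h, max_eq_right (by linarith)]; ring
        rw [this]; ring
      rw [Finset.sum_congr rfl (fun i _ => this i), ← Finset.smul_sum, hβ]
    have h1A : (1/A) • c ∈ S := by
      rw [← hμc]
      exact hSconv.sum_mem (fun j _ => hμ0 j) hμsum
        (fun j _ => subset_convexHull ℝ _ ⟨j, rfl⟩)
    have heq : s • c = (s*A) • ((1/A) • c) := by
      rw [smul_smul]; congr 1; field_simp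
    rw [heq]
    exact hscale _ h1A _ (by positivity) hs1
  set T : Set ℝ := {t : ℝ | t • c ∈ S} with hT
  obtain ⟨k, hk⟩ : ∃ k, c k ≠ 0 := by
    by_contra h; push_neg at h; exact hc0 (funext h)
  set R : ℝ := (∑ j, |y j k|) / |c k| with hR
  have hTsub : T ⊆ Set.Icc (-R) R := by
    intro t ht
    have hmem : t • c ∈ S := ht
    have hbound : ∀ v ∈ S, |v k| ≤ ∑ j, |y j k| := by
      intro v hv
      have hconv : Convex ℝ {v : Fin p → ℝ | |v k| ≤ ∑ j, |y j k|} := by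
        intro u hu w hw av bv hav hbv hab
        simp only [Set.mem_setOf_eq] at hu hw ⊢
        calc |(av • u + bv • w) k| ≤ |av * u k| + |bv * w k| := abs_add_le _ _
          _ = av * |u k| + bv * |w k| := by
              rw [abs_mul, abs_mul, abs_of_nonneg hav, abs_of_nonneg hbv]
          _ ≤ av * (∑ j, |y j k|) + bv * (∑ j, |y j k|) :=
              add_le_add (mul_le_mul_of_nonneg_left hu hav)
                (mul_le_mul_of_nonneg_left hw hbv)
          _ = ∑ j, |y j k| := by rw [← add_mul, hab, one_mul]
      have hsub2 : Set.range y ⊆ {v : Fin p → ℝ | |v k| ≤ ∑ j, |y j k|} := by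
        rintro _ ⟨j, rfl⟩
        exact Finset.single_le_sum (f := fun j => |y j k|) (fun j _ => abs_nonneg _) (mem_univ j)
      exact convexHull_min hsub2 hconv hv
    have hb := hbound _ hmem
    rw [Pi.smul_apply, smul_eq_mul, abs_mul] at hb
    have h2 : |t| ≤ R := by
      rw [hR, le_div_iff₀ (abs_pos.2 hk)]
      exact hb
    exact abs_le.1 h2
  have hclosed : IsClosed T := by
    have hSc : IsClosed S := (Set.finite_range y).isCompact_convexHull ℝ |>.isClosed
    exact hSc.preimage (continuous_id.smul continuous_const)
  have hTne : T.Nonempty := ⟨0, by show (0:ℝ) • c ∈ S; simpa using hS0⟩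
  have hTcompact : IsCompact T :=
    isCompact_Icc.of_isClosed_subset hclosed hTsub
  set tstar := sSup T with htstar
  have htmem : tstar ∈ T := hTcompact.sSup_mem hTne
  have hbddT : BddAbove T := hTcompact.bddAbove
  have htpos : 0 < tstar := by
    have h1 : (∑ i, |a i|)⁻¹ ∈ T :=
      hkey a ha _ (inv_nonneg.2 (habs_pos a ha).le)
        (le_of_eq (inv_mul_cancel₀ (habs_pos a ha).ne'))
    exact lt_of_lt_of_le (inv_pos.2 (habs_pos a ha)) (le_csSup hbddT h1)
  have hlow : ∀ (w : Fin N → ℝ) (z : Fin p → ℝ), (∀ i, 0 ≤ w i) → ∑ i, w i = 1 →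
      (covMatrix w x) *ᵥ z = c → 1/tstar^2 ≤ z ⬝ᵥ c := by
    intro w z hw hw1 hz
    set β : Fin N → ℝ := fun i => w i * (x i ⬝ᵥ z) with hβdef
    have hcrep : ∑ i, β i • x i = c := by
      rw [← hz, covMatrix, sum_vecMulVec_mulVec]
    have hq : z ⬝ᵥ c = ∑ i, β i * (z ⬝ᵥ x i) := by
      rw [← hcrep, dotProduct_sum_smul]
    set A := ∑ i, |β i| with hAdef
    have hApos : 0 < A := habs_pos β hcrep
    have hCS : A^2 ≤ z ⬝ᵥ c := by
      have h1 : A^2 ≤ (∑ i, w i) * (∑ i, w i * (x i ⬝ᵥ z)^2) := by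
        refine Finset.sum_sq_le_sum_mul_sum_of_sq_eq_mul univ
          (fun i _ => hw i) (fun i _ => mul_nonneg (hw i) (sq_nonneg _)) (fun i _ => ?_)
        rw [sq_abs, hβdef]; ring
      rw [hw1, one_mul] at h1
      refine h1.trans (le_of_eq ?_)
      rw [hq]
      refine Finset.sum_congr rfl fun i _ => ?_
      rw [hβdef, dotProduct_comm z (x i)]; ring
    have hin : A⁻¹ ∈ T :=
      hkey β hcrep A⁻¹ (inv_nonneg.2 hApos.le) (le_of_eq (inv_mul_cancel₀ hApos.ne'))
    have h2 : A⁻¹ ≤ tstar := le_csSup hbddT hin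
    have h3 : tstar⁻¹ ≤ A := by
      rw [inv_le_comm₀ htpos hApos]
      exact h2
    calc 1/tstar^2 = (tstar⁻¹)^2 := by rw [one_div, inv_pow]
      _ ≤ A^2 := pow_le_pow_left₀ (inv_pos.2 htpos).le h3 2
      _ ≤ z ⬝ᵥ c := hCS
  have htc : tstar • c ∈ convexHull ℝ (Set.range y) := htmem
  obtain ⟨ι, hι, v, lam, hrange, hai, hlampos, hlamsum, hlamc⟩ :=
    eq_pos_convex_span_of_mem_convexHull htc
  letI : Fintype ι := hι
  have hne : Nonempty ι := by
    by_contra h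
    rw [not_nonempty_iff] at h
    rw [Finset.univ_eq_empty, Finset.sum_empty] at hlamsum
    exact one_ne_zero hlamsum.symm
  have hune : (Finset.univ : Finset ι).Nonempty := univ_nonempty
  have hvS : ∀ j, v j ∈ S := fun j => subset_convexHull ℝ _ (hrange ⟨j, rfl⟩)
  have hpert : ∀ ρ : ι → ℝ, (∀ j, 0 ≤ ρ j) → ∑ j, ρ j = 1 → ∀ τ : ℝ,
      ∑ j, ρ j • v j = τ • c → τ ≤ tstar := by
    intro ρ hρ0 hρ1 τ hρc
    refine le_csSup hbddT ?_
    show τ • c ∈ S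
    rw [← hρc]
    exact hSconv.sum_mem (fun j _ => hρ0 j) hρ1 (fun j _ => hvS j)
  set m0 := Finset.univ.inf' hune lam with hm0def
  have hm0 : 0 < m0 := (Finset.lt_inf'_iff hune).2 (fun j _ => hlampos j)
  have hcard : Fintype.card ι ≤ p := by
    have hle : Fintype.card ι ≤ p + 1 := by
      have h1 := hai.card_le_finrank_succ
      have h2 : Module.finrank ℝ (vectorSpan ℝ (Set.range v)) ≤ p := by
        have h3 := Submodule.finrank_le (vectorSpan ℝ (Set.range v))
        rwa [Module.finrank_fin_fun] at h3
      omega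
    by_contra hgt
    push_neg at hgt
    have hcardeq : Fintype.card ι = p + 1 := le_antisymm hle hgt
    have htop : affineSpan ℝ (Set.range v) = ⊤ :=
      hai.affineSpan_eq_top_iff_card_eq_finrank_add_one.2
        (by rw [hcardeq, Module.finrank_fin_fun])
    obtain ⟨j0⟩ := hne
    have hmem2 : c + v j0 ∈ affineSpan ℝ (Set.range v) := by rw [htop]; trivial
    obtain ⟨δw, hδ1, hδ2⟩ := eq_affineCombination_of_mem_affineSpan_of_fintype hmem2
    rw [Finset.univ.affineCombination_eq_linear_combination v δw hδ1] at hδ2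
    set γ : ι → ℝ := fun j => δw j - if j = j0 then 1 else 0 with hγ
    have hind : ∑ j, (if j = j0 then (1:ℝ) else 0) = 1 := by simp
    have hindv : ∑ j, (if j = j0 then (1:ℝ) else 0) • v j = v j0 := by
      simp [ite_smul]
    have hγsum : ∑ j, γ j = 0 := by
      simp only [hγ, Finset.sum_sub_distrib, hδ1, hind, sub_self]
    have hγv : ∑ j, γ j • v j = c := by
      simp only [hγ, sub_smul, Finset.sum_sub_distrib, hindv, ← hδ2]
      abel
    set G := Finset.univ.sup' hune (fun j => |γ j|) with hG
    have hG0 : 0 ≤ G :=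
      le_trans (abs_nonneg (γ j0)) (Finset.le_sup' (fun j => |γ j|) (mem_univ j0))
    set δ := m0 / (G + 1) with hδdef
    have hδpos : 0 < δ := div_pos hm0 (by linarith)
    have hδG : δ * (G + 1) = m0 := by
      rw [hδdef, div_mul_cancel₀]
      linarith
    have hρ0 : ∀ j, 0 ≤ lam j + δ * γ j := by
      intro j
      have h1 : |γ j| ≤ G := Finset.le_sup' (fun j => |γ j|) (mem_univ j)
      have h2 : m0 ≤ lam j := Finset.inf'_le _ (mem_univ j)
      nlinarith [neg_abs_le (γ j), hδpos.le]
    have hρ1 : ∑ j, (lam j + δ * γ j) = 1 := by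
      rw [Finset.sum_add_distrib, hlamsum, ← Finset.mul_sum, hγsum]; ring
    have hρc : ∑ j, (lam j + δ * γ j) • v j = (tstar + δ) • c := by
      simp only [add_smul, Finset.sum_add_distrib, hlamc, mul_smul]
      rw [← Finset.smul_sum, hγv]
    have := hpert _ hρ0 hρ1 _ hρc
    linarith
  have hsolv : ∃ u : Fin p → ℝ, ∀ j : ι, v j ⬝ᵥ u = 1/tstar := by
    set Φ : (Fin p → ℝ) →ₗ[ℝ] (ι → ℝ) :=
      { toFun := fun u j => v j ⬝ᵥ u
        map_add' := by intro u1 u2; funext j; simp [dotProduct_add]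
        map_smul' := by intro r u1; funext j; simp [dotProduct_smul] } with hΦ
    by_cases hmemW : (fun _ : ι => 1/tstar) ∈ LinearMap.range Φ
    · obtain ⟨u, hu⟩ := hmemW
      exact ⟨u, fun j => congrFun hu j⟩
    · exfalso
      obtain ⟨f, hf0, hfbot⟩ :=
        Submodule.exists_dual_map_eq_bot_of_notMem hmemW inferInstance
      set μ : ι → ℝ := fun j => f (Pi.single j 1) with hμdef
      have hfval : ∀ g : ι → ℝ, f g = ∑ j, g j * μ j := by
        intro g
        have hgrep : g = ∑ j, g j • (Pi.single j (1:ℝ) : ι → ℝ) := by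
          funext m
          simp [Finset.sum_apply, Pi.single_apply]
        conv_lhs => rw [hgrep]
        rw [map_sum]
        simp [hμdef]
      have hker : ∀ u : Fin p → ℝ, ∑ j, (v j ⬝ᵥ u) * μ j = 0 := by
        intro u
        have h2 : f (Φ u) ∈ Submodule.map f (LinearMap.range Φ) :=
          Submodule.mem_map_of_mem ⟨u, rfl⟩
        rw [hfbot, Submodule.mem_bot] at h2
        rw [hfval] at h2
        exact h2
      have hμv : ∑ j, μ j • v j = 0 := by
        funext m
        have h3 := hker (Pi.single m 1)
        simp only [dotProduct_single, mul_one] at h3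
        simp only [Finset.sum_apply, Pi.smul_apply, smul_eq_mul, Pi.zero_apply]
        rw [← h3]
        exact Finset.sum_congr rfl fun j _ => by ring
      set s := ∑ j, μ j with hsdef
      have hs : s ≠ 0 := by
        intro hs0
        apply hf0
        rw [hfval]
        have : ∑ j, (fun _ : ι => 1/tstar) j * μ j = (1/tstar) * s := by
          rw [hsdef, Finset.mul_sum]
        rw [this, hs0, mul_zero]
      set ν : ι → ℝ := if 0 < s then (fun j => -μ j) else μ with hν
      have hνv : ∑ j, ν j • v j = 0 := by
        by_cases h : 0 < s
        · simp only [hν, if_pos h, neg_smul, Finset.sum_neg_distrib, hμv, neg_zero]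
        · simp only [hν, if_neg h]; exact hμv
      have hνs : ∑ j, ν j < 0 := by
        by_cases h : 0 < s
        · simp only [hν, if_pos h, Finset.sum_neg_distrib, ← hsdef]; linarith
        · simp only [hν, if_neg h, ← hsdef]
          exact lt_of_le_of_ne (not_lt.1 h) hs
      set s2 := ∑ j, ν j with hs2def
      set G2 := Finset.univ.sup' hune (fun j => |ν j|) with hG2def
      have hG2 : 0 ≤ G2 := by
        obtain ⟨j0⟩ := hne
        exact le_trans (abs_nonneg (ν j0)) (Finset.le_sup' (fun j => |ν j|) (mem_univ j0))
      set δ2 := min (m0/(G2+1)) (1/(2 * (-s2))) with hδ2def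
      have hδ2pos : 0 < δ2 :=
        lt_min (div_pos hm0 (by linarith)) (div_pos one_pos (by linarith))
      have habs : ∀ j, |ν j| ≤ G2 := fun j => Finset.le_sup' (fun j => |ν j|) (mem_univ j)
      have hlamlb : ∀ j, m0 ≤ lam j := fun j => Finset.inf'_le _ (mem_univ j)
      have h4 : δ2 ≤ m0/(G2+1) := min_le_left _ _
      have h6 : δ2 ≤ 1/(2*(-s2)) := min_le_right _ _
      clear_value ν s2 G2 δ2
      have hnn : ∀ j, 0 ≤ lam j + δ2 * ν j := by
        intro j
        have h1 := habs j
        have h2 := hlamlb j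
        have h5 : δ2 * (G2 + 1) ≤ m0 := by
          rw [← le_div_iff₀ (by linarith : (0:ℝ) < G2 + 1)]
          exact h4
        nlinarith [neg_abs_le (ν j), hδ2pos.le]
      set D := 1 + δ2 * s2 with hD
      have hD1 : D < 1 := by nlinarith
      have hDhalf : (1:ℝ)/2 ≤ D := by
        have h7 : δ2 * (2*(-s2)) ≤ 1 := by
          rw [← le_div_iff₀ (by linarith : (0:ℝ) < 2*(-s2))]
          exact h6
        nlinarith
      have hDpos : 0 < D := by linarith
      have hρsum : ∑ j, (lam j + δ2 * ν j)/D = 1 := by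
        rw [← Finset.sum_div, Finset.sum_add_distrib, hlamsum, ← Finset.mul_sum, ← hs2def, ← hD,
          div_self hDpos.ne']
      have hρc2 : ∑ j, ((lam j + δ2 * ν j)/D) • v j = (tstar/D) • c := by
        have hstep : ∀ j : ι, ((lam j + δ2*ν j)/D) • v j
            = (1/D) • ((lam j + δ2*ν j) • v j) := by
          intro j; rw [smul_smul]; congr 1; ring
        rw [Finset.sum_congr rfl (fun j _ => hstep j), ← Finset.smul_sum]
        have hin : ∑ j, (lam j + δ2 * ν j) • v j = tstar • c := by
          simp only [add_smul, Finset.sum_add_distrib, hlamc, mul_smul]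
          rw [← Finset.smul_sum, hνv, smul_zero, add_zero]
        rw [hin, smul_smul]
        congr 1
        ring
      have hle2 := hpert _ (fun j => div_nonneg (hnn j) hDpos.le) hρsum _ hρc2
      have hgt2 : tstar < tstar / D := by
        rw [lt_div_iff₀ hDpos]
        nlinarith
      linarith
  obtain ⟨u, hu⟩ := hsolv
  have hch : ∀ j : ι, ∃ sidx : Fin N ⊕ Fin N, y sidx = v j := fun j => hrange ⟨j, rfl⟩
  choose sidx hsidx using hch
  set idx : ι → Fin N := fun j => Sum.elim id id (sidx j) with hidx
  have hvv : ∀ j, vecMulVec (v j) (v j) = vecMulVec (x (idx j)) (x (idx j)) := by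
    intro j
    rcases hsj : sidx j with i | i
    · have hvx : v j = x i := by rw [← hsidx j, hsj]; rfl
      have hij : idx j = i := by rw [hidx]; simp [hsj]
      rw [hvx, hij]
    · have hvx : v j = -(x i) := by rw [← hsidx j, hsj]; rfl
      have hij : idx j = i := by rw [hidx]; simp [hsj]
      rw [hvx, hij]
      ext a b
      simp only [vecMulVec_apply, Pi.neg_apply]
      ring
  set wstar : Fin N → ℝ := fun i => ∑ j ∈ Finset.univ.filter (fun j => idx j = i), lam j
    with hwstar
  refine ⟨wstar, ?_, ?_, ?_, ?_, ?_⟩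
  · intro i
    exact Finset.sum_nonneg fun j _ => (hlampos j).le
  · rw [hwstar]
    rw [Finset.sum_fiberwise_eq_sum_filter Finset.univ Finset.univ idx lam]
    simp [hlamsum]
  · have hsub : (Finset.univ.filter fun i => wstar i ≠ 0) ⊆ Finset.univ.image idx := by
      intro i hi
      rw [Finset.mem_filter] at hi
      rw [Finset.mem_image]
      by_contra hno
      push_neg at hno
      apply hi.2
      rw [hwstar]
      apply Finset.sum_eq_zero
      intro j hj
      rw [Finset.mem_filter] at hj
      exact absurd hj.2 (hno j (mem_univ j))
    calc (Finset.univ.filter fun i => wstar i ≠ 0).card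
        ≤ (Finset.univ.image idx).card := Finset.card_le_card hsub
      _ ≤ (Finset.univ : Finset ι).card := Finset.card_image_le
      _ = Fintype.card ι := rfl
      _ ≤ p := hcard
  all_goals {
    have hMstar : covMatrix wstar x = ∑ j, lam j • vecMulVec (v j) (v j) := by
      rw [covMatrix, hwstar]
      have h1 : ∀ i : Fin N, (∑ j ∈ Finset.univ.filter (fun j => idx j = i), lam j) •
          vecMulVec (x i) (x i)
          = ∑ j ∈ Finset.univ.filter (fun j => idx j = i),
              lam j • vecMulVec (x (idx j)) (x (idx j)) := by
        intro i
        rw [Finset.sum_smul]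
        refine Finset.sum_congr rfl fun j hj => ?_
        rw [Finset.mem_filter] at hj
        rw [hj.2]
      rw [Finset.sum_congr rfl fun i _ => h1 i]
      rw [Finset.sum_fiberwise_eq_sum_filter Finset.univ Finset.univ idx
        (fun j => lam j • vecMulVec (x (idx j)) (x (idx j)))]
      simp only [Finset.mem_univ, Finset.filter_true]
      exact Finset.sum_congr rfl fun j _ => by rw [hvv]
    have hmulvec : (covMatrix wstar x) *ᵥ u = c := by
      rw [hMstar, sum_vecMulVec_mulVec]
      have h2 : ∀ j : ι, (lam j * (v j ⬝ᵥ u)) • v j = (1/tstar) • (lam j • v j) := by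
        intro j
        rw [hu j, smul_smul]
        congr 1
        ring
      rw [Finset.sum_congr rfl fun j _ => h2 j, ← Finset.smul_sum, hlamc, smul_smul]
      rw [one_div, inv_mul_cancel₀ htpos.ne', one_smul]
    have hval : u ⬝ᵥ c = 1/tstar^2 := by
      have h3 : u ⬝ᵥ (tstar • c) = ∑ j, lam j * (u ⬝ᵥ v j) := by
        rw [← hlamc, dotProduct_sum_smul]
      have h4 : ∑ j, lam j * (u ⬝ᵥ v j) = 1/tstar := by
        have : ∀ j : ι, lam j * (u ⬝ᵥ v j) = lam j * (1/tstar) := by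
          intro j
          rw [dotProduct_comm, hu j]
        rw [Finset.sum_congr rfl fun j _ => this j, ← Finset.sum_mul, hlamsum, one_mul]
      have h5 : u ⬝ᵥ (tstar • c) = tstar * (u ⬝ᵥ c) := by
        rw [dotProduct_smul, smul_eq_mul]
      rw [h5, h4] at h3
      field_simp at h3 ⊢
      linarith [h3]
    first
    | exact ⟨u, hmulvec⟩
    | · intro w hw hw1 hz
        obtain ⟨zw, hzw⟩ := hz
        rw [penrose_value wstar x u c hmulvec, penrose_value w x zw c hzw]
        rw [hval]
        exact hlow w zw hw hw1 hzw }
end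

section
/- Let N be even, p ≥ 1, and let B be an N×p real matrix whose rows are B₁ᵀ,…,B_Nᵀ, satisfying BᵀB = N·I_p and B_{i1} = 1 for all 1 ≤ i ≤ N. Define vectors x₁,…,x_N ∈ ℝ^p by x_i = (B_i + B_{i+1})/√2 if i is odd and x_i = (B_{i−1} − B_i)/√2 if i is even. Then: (a) (1/N)·Σ_{i=1}^N x_i x_iᵀ = I_p; (b) the first coordinate satisfies x_{i1} = √2 when i is odd and x_{i1} = 0 when i is even; and (c) ‖x_i‖_∞ ≤ √2 · max_{i,j} |B_{ij}| for all i. -/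
open Matrix Real Finset

private lemma sum_range_two_mul {α : Type*} [AddCommMonoid α] (m : ℕ) (g : ℕ → α) :
    ∑ i ∈ Finset.range (2 * m), g i
      = ∑ k ∈ Finset.range m, (g (2 * k) + g (2 * k + 1)) := by
  induction m with
  | zero => simp
  | succ n ih =>
      have h2 : 2 * (n + 1) = (2 * n) + 1 + 1 := by ring
      rw [h2, Finset.sum_range_succ, Finset.sum_range_succ, ih,
        Finset.sum_range_succ, add_assoc]

/-- The explicit construction of an experimental domain from a matrix `B` with
`BᵀB = N·I_p` and constant first column. Rows are 0-indexed: the 1-indexed pair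
`(2k+1, 2k+2)` of the paper corresponds to `(2k, 2k+1)` here, with
`x_{2k} = (B_{2k} + B_{2k+1})/√2` ("odd" rows of the paper) and
`x_{2k+1} = (B_{2k} - B_{2k+1})/√2` ("even" rows of the paper). -/
theorem experimental_domain_construction
    (N p : ℕ) (hN : 0 < N) (hNeven : Even N) (hp : 0 < p)
    (B : Matrix (Fin N) (Fin p) ℝ)
    (hBtB : Bᵀ * B = (N : ℝ) • (1 : Matrix (Fin p) (Fin p) ℝ))
    (hBcol : ∀ i : Fin N, B i ⟨0, hp⟩ = 1)
    (M : ℝ) (hM : ∀ i j, |B i j| ≤ M)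
    (x : Fin N → Fin p → ℝ)
    (hxodd : ∀ (k : ℕ) (h : 2 * k + 1 < N),
      x ⟨2 * k, by omega⟩ =
        fun j => (B ⟨2 * k, by omega⟩ j + B ⟨2 * k + 1, h⟩ j) / Real.sqrt 2)
    (hxeven : ∀ (k : ℕ) (h : 2 * k + 1 < N),
      x ⟨2 * k + 1, h⟩ =
        fun j => (B ⟨2 * k, by omega⟩ j - B ⟨2 * k + 1, h⟩ j) / Real.sqrt 2) :
    ((N : ℝ)⁻¹ • ∑ i, Matrix.vecMulVec (x i) (x i) =
        (1 : Matrix (Fin p) (Fin p) ℝ)) ∧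
    (∀ (k : ℕ) (h : 2 * k + 1 < N),
      x ⟨2 * k, by omega⟩ ⟨0, hp⟩ = Real.sqrt 2 ∧
      x ⟨2 * k + 1, h⟩ ⟨0, hp⟩ = 0) ∧
    (∀ i j, |x i j| ≤ Real.sqrt 2 * M) := by
  have hs : Real.sqrt 2 * Real.sqrt 2 = 2 := Real.mul_self_sqrt (by norm_num)
  have hspos : (0 : ℝ) < Real.sqrt 2 := Real.sqrt_pos.mpr (by norm_num)
  have hN2 : N % 2 = 0 := Nat.even_iff.mp hNeven
  refine ⟨?_, ?_, ?_⟩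
  · -- part (a)
    ext j j'
    have hentry := congrFun (congrFun hBtB j) j'
    simp only [Matrix.mul_apply, Matrix.transpose_apply, Matrix.smul_apply,
      smul_eq_mul] at hentry
    have hsum : ∑ i : Fin N, x i j * x i j' = ∑ i : Fin N, B i j * B i j' := by
      set m := N / 2 with hmdef
      have hmN : N = 2 * m := by omega
      set G : ℕ → ℝ := fun i => if h : i < N then x ⟨i, h⟩ j * x ⟨i, h⟩ j' else 0
        with hG
      set H : ℕ → ℝ := fun i => if h : i < N then B ⟨i, h⟩ j * B ⟨i, h⟩ j' else 0
        with hH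
      have hGx : ∑ i : Fin N, x i j * x i j' = ∑ i ∈ Finset.range N, G i := by
        rw [← Fin.sum_univ_eq_sum_range]
        refine Finset.sum_congr rfl fun i _ => ?_
        simp [hG, i.isLt]
      have hHB : ∑ i : Fin N, B i j * B i j' = ∑ i ∈ Finset.range N, H i := by
        rw [← Fin.sum_univ_eq_sum_range]
        refine Finset.sum_congr rfl fun i _ => ?_
        simp [hH, i.isLt]
      rw [hGx, hHB, hmN, sum_range_two_mul, sum_range_two_mul]
      refine Finset.sum_congr rfl fun k hk => ?_
      have hkm : k < m := Finset.mem_range.mp hk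
      have h1 : 2 * k + 1 < N := by omega
      have h0 : 2 * k < N := by omega
      have e1 := congrFun (hxodd k h1) j
      have e2 := congrFun (hxodd k h1) j'
      have e3 := congrFun (hxeven k h1) j
      have e4 := congrFun (hxeven k h1) j'
      simp only [hG, hH, dif_pos h0, dif_pos h1]
      rw [e1, e2, e3, e4]
      rw [div_mul_div_comm, div_mul_div_comm, hs]
      ring
    have hNne : ((N : ℝ)) ≠ 0 := Nat.cast_ne_zero.mpr (by omega)
    simp only [Matrix.smul_apply, Matrix.sum_apply, Matrix.vecMulVec_apply,
      smul_eq_mul]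
    rw [hsum, hentry]
    field_simp
  · -- part (b)
    intro k h
    constructor
    · rw [congrFun (hxodd k h) ⟨0, hp⟩, hBcol, hBcol]
      rw [div_eq_iff (ne_of_gt hspos), hs]
      norm_num
    · rw [congrFun (hxeven k h) ⟨0, hp⟩, hBcol, hBcol]
      simp
  · -- part (c)
    intro i j
    have hM0 : 0 ≤ M := le_trans (abs_nonneg _) (hM ⟨0, hN⟩ ⟨0, hp⟩)
    have hkey : ∀ a b : ℝ, |a| ≤ M → |b| ≤ M →
        |(a + b) / Real.sqrt 2| ≤ Real.sqrt 2 * M := by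
      intro a b ha hb
      rw [abs_div, abs_of_pos hspos, div_le_iff₀ hspos]
      have habs := abs_add_le a b
      have h2M : Real.sqrt 2 * M * Real.sqrt 2 = 2 * M := by
        rw [mul_right_comm, hs]
      linarith
    rcases Nat.even_or_odd i.val with he | ho
    · obtain ⟨k, hk⟩ := he
      have h1 : 2 * k + 1 < N := by omega
      have hi : i = ⟨2 * k, by omega⟩ := Fin.ext (by simpa using by omega)
      rw [hi, congrFun (hxodd k h1) j]
      exact hkey _ _ (hM _ _) (hM _ _)
    · obtain ⟨k, hk⟩ := ho
      have h1 : 2 * k + 1 < N := by omega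
      have hi : i = ⟨2 * k + 1, h1⟩ := Fin.ext (by simpa using by omega)
      rw [hi, congrFun (hxeven k h1) j]
      have : B ⟨2 * k, by omega⟩ j - B ⟨2 * k + 1, h1⟩ j
          = B ⟨2 * k, by omega⟩ j + (- B ⟨2 * k + 1, h1⟩ j) := by ring
      rw [this]
      exact hkey _ _ (hM _ _) (by simpa using hM _ _)
end
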